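/- With Sᵢ(q) = Ad_{gᵢ(q)} Yᵢ as above, the iterated partial derivative for indices α₁,…,α_ν all less than i satisfies ∂^ν Sᵢ / (∂q_{α₁} ⋯ ∂q_{α_ν}) = ad_{S_{β_ν}} ad_{S_{β_{ν-1}}} ⋯ ad_{S_{β₁}} Sᵢ, where β_ν ≤ β_{ν-1} ≤ … ≤ β₁ < i is the decreasing rearrangement of {α₁,…,α_ν} and ad_A B = [A,B]; the derivative vanishes whenever some α_j ≥ i. -/

import Mathlib

/-- Partial derivative with respect to the `j`-th coordinate. -/
noncomputable def partialDeriv {n : ℕ} (j : Fin n) (F : (Fin n → ℝ) → ℝ)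
    (q : Fin n → ℝ) : ℝ :=
  deriv (fun s => F (Function.update q j s)) (q j)

/-- Iterated partial derivative along a list of coordinate indices. -/
noncomputable def partialDerivSeq {n : ℕ} :
    List (Fin n) → ((Fin n → ℝ) → ℝ) → ((Fin n → ℝ) → ℝ)
  | [], F => F
  | j :: rest, F => partialDeriv j (partialDerivSeq rest F)

/-- `gᵢ(q) = exp(Y₁q₁)⋯exp(Yᵢqᵢ)` (0-indexed, `i` inclusive). -/
noncomputable def poePartial {m n : ℕ} (Y : Fin n → Matrix (Fin m) (Fin m) ℝ)
    (i : Fin n) (q : Fin n → ℝ) : Matrix (Fin m) (Fin m) ℝ :=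
  ((List.ofFn fun j : Fin n => NormedSpace.exp (q j • Y j)).take ((i : ℕ) + 1)).prod

/-- The instantaneous joint screw `Sᵢ(q) = gᵢ(q)·Yᵢ·gᵢ(q)⁻¹`. -/
noncomputable def poeScrew {m n : ℕ} (Y : Fin n → Matrix (Fin m) (Fin m) ℝ)
    (i : Fin n) (q : Fin n → ℝ) : Matrix (Fin m) (Fin m) ℝ :=
  poePartial Y i q * Y i * (poePartial Y i q)⁻¹

/-- Nested adjoint: `nestedAd [A₁, …, A_ν] X = ad_{A₁} (ad_{A₂} ⋯ (ad_{A_ν} X))`,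
with `ad_A B = A·B − B·A`. -/
def nestedAd {m : ℕ} (l : List (Matrix (Fin m) (Fin m) ℝ))
    (X : Matrix (Fin m) (Fin m) ℝ) : Matrix (Fin m) (Fin m) ℝ :=
  l.foldr (fun A B => A * B - B * A) X

/-!
Fix `j ≤ k` and move only `q_j = s`. Then `g_k = P · exp(s Y_j) · T` with `P = g_{j-1}` and `T`
independent of `s`, so `S_k = P (exp(s Y_j) C exp(-s Y_j)) P⁻¹` for a fixed `C`, whose derivative
is `P [Y_j, ·] P⁻¹ = [S_j, S_k]` because `S_j = P Y_j P⁻¹`. The screws `S_k` with `k ≤ j` do not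
depend on `q_j`. So `∂_j` acts on a nested bracket of screws as the derivation `ad_{S_j}` on the
factors of index `≥ j` and as zero on the others; by the Jacobi identity this inserts `S_j` into
the nested bracket at its sorted position, and induction on the number of derivatives concludes.
-/

open NormedSpace Function

theorem List.ofFn_update {α : Type*} {n : ℕ} (f : Fin n → α) (j : Fin n) (x : α) :
    List.ofFn (update f j x) = (List.ofFn f).set j x := by
  refine List.ext_getElem (by simp) fun t h _ => ?_
  simp only [List.getElem_ofFn, List.getElem_set, update_apply, Fin.ext_iff, eq_comm]

theorem List.prod_take_set {M : Type*} [Monoid M] (L : List M) {j k : ℕ} (hjk : j ≤ k)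
    (hj : j < L.length) (x : M) :
    ((L.set j x).take (k + 1)).prod =
      (L.take j).prod * x * ((L.take (k + 1)).drop (j + 1)).prod := by
  rw [← List.prod_take_mul_prod_drop _ (j + 1), List.take_take, min_eq_left (by omega),
    List.prod_take_succ _ j (by simpa), List.take_set_of_le le_rfl, List.getElem_set_self,
    List.take_set, List.drop_set_of_lt (by omega)]

theorem List.insertionSort_ofFn_eq_of_monotone {α : Type*} [LinearOrder α] {ν : ℕ}
    {f g : Fin ν → α} (hg : Monotone g) (σ : Equiv.Perm (Fin ν)) (hfg : g = f ∘ σ) :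
    (List.ofFn f).insertionSort (· ≤ ·) = List.ofFn g :=
  List.Perm.eq_of_pairwise' (List.pairwise_insertionSort _ _)
    (List.sortedLE_ofFn_iff.mpr hg).pairwise
    ((List.perm_insertionSort _ _).trans (hfg ▸ Equiv.Perm.ofFn_comp_perm σ f).symm)

theorem Ring.lie_conj_of_mul_eq_one {R : Type*} [Ring R] {P P' : R} (h : P' * P = 1) (A B : R) :
    ⁅P * A * P', P * B * P'⁆ = P * ⁅A, B⁆ * P' := by
  simp only [Ring.lie_def, mul_assoc, ← mul_assoc P' P, h, one_mul]
  noncomm_ring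

theorem hasDerivAt_exp_smul_conj {𝕂 𝔸 : Type*} [RCLike 𝕂] [NormedRing 𝔸] [NormedAlgebra 𝕂 𝔸]
    [CompleteSpace 𝔸] (Y C : 𝔸) (t : 𝕂) :
    HasDerivAt (fun s : 𝕂 => exp (s • Y) * C * exp (s • -Y))
      ⁅Y, exp (t • Y) * C * exp (t • -Y)⁆ t := by
  convert ((hasDerivAt_exp_smul_const' Y t).mul_const C).fun_mul
    (hasDerivAt_exp_smul_const (-Y) t) using 1
  rw [Ring.lie_def]
  noncomm_ring

def HasPartialDerivAt {n : ℕ} {E : Type*} [NormedAddCommGroup E] [NormedSpace ℝ E]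
    (F : (Fin n → ℝ) → E) (F' : E) (j : Fin n) (q : Fin n → ℝ) : Prop :=
  HasDerivAt (fun s => F (update q j s)) F' (q j)

namespace HasPartialDerivAt

variable {n : ℕ} {j : Fin n} {q : Fin n → ℝ}

theorem of_update_eq {E : Type*} [NormedAddCommGroup E] [NormedSpace ℝ E]
    {F : (Fin n → ℝ) → E} (h : ∀ s, F (update q j s) = F q) : HasPartialDerivAt F 0 j q := by
  simp only [HasPartialDerivAt, h]
  exact hasDerivAt_const _ _

theorem lie {𝔸 : Type*} [NormedRing 𝔸] [NormedAlgebra ℝ 𝔸] {F G : (Fin n → ℝ) → 𝔸}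
    {F' G' : 𝔸} (hF : HasPartialDerivAt F F' j q) (hG : HasPartialDerivAt G G' j q) :
    HasPartialDerivAt (fun p => ⁅F p, G p⁆) (⁅F', G q⁆ + ⁅F q, G'⁆) j q := by
  have h := (hF.fun_mul hG).fun_sub (hG.fun_mul hF)
  simp only [update_eq_self] at h
  simp only [HasPartialDerivAt, Ring.lie_def]
  convert h using 1
  abel

end HasPartialDerivAt

section PoeScrew

-- Any matrix norm would do: it only serves to differentiate matrix-valued maps entrywise.
attribute [local instance] Matrix.linftyOpNormedRing Matrix.linftyOpNormedAlgebra

variable {m n : ℕ} (Y : Fin n → Matrix (Fin m) (Fin m) ℝ)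

theorem HasPartialDerivAt.partialDeriv_apply {F : (Fin n → ℝ) → Matrix (Fin m) (Fin m) ℝ}
    {F' : Matrix (Fin m) (Fin m) ℝ} {j : Fin n} {q : Fin n → ℝ}
    (h : HasPartialDerivAt F F' j q) (a b : Fin m) :
    partialDeriv j (fun p => F p a b) q = F' a b :=
  ((Matrix.entryLinearMap ℝ ℝ a b).toContinuousLinearMap.hasFDerivAt.comp_hasDerivAt _ h).deriv

theorem nestedAd_cons (A : Matrix (Fin m) (Fin m) ℝ) (l : List (Matrix (Fin m) (Fin m) ℝ))
    (X : Matrix (Fin m) (Fin m) ℝ) : nestedAd (A :: l) X = ⁅A, nestedAd l X⁆ :=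
  (Ring.lie_def _ _).symm

noncomputable def poeFactors (q : Fin n → ℝ) : List (Matrix (Fin m) (Fin m) ℝ) :=
  List.ofFn fun t => exp (q t • Y t)

theorem poePartial_eq_prod_take (k : Fin n) (q : Fin n → ℝ) :
    poePartial Y k q = ((poeFactors Y q).take (k + 1)).prod :=
  rfl

theorem poeFactors_update (q : Fin n → ℝ) (j : Fin n) (s : ℝ) :
    poeFactors Y (update q j s) = (poeFactors Y q).set j (exp (s • Y j)) := by
  rw [poeFactors, poeFactors, ← List.ofFn_update]
  congr 1
  funext t
  rcases eq_or_ne t j with rfl | htj <;> simp [*]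

theorem take_poeFactors_update_of_le {r : ℕ} {j : Fin n} (hrj : r ≤ j) (q : Fin n → ℝ) (s : ℝ) :
    (poeFactors Y (update q j s)).take r = (poeFactors Y q).take r := by
  rw [poeFactors_update, List.take_set_of_le hrj]

theorem isUnit_prod_take_poeFactors (r : ℕ) (q : Fin n → ℝ) :
    IsUnit ((poeFactors Y q).take r).prod :=
  List.prod_isUnit fun _ hA => by
    obtain ⟨t, rfl⟩ := List.mem_ofFn.mp (List.mem_of_mem_take hA)
    exact Matrix.isUnit_exp _

theorem poePartial_update_of_le {j k : Fin n} (hjk : j ≤ k) (q : Fin n → ℝ) (s : ℝ) :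
    poePartial Y k (update q j s) = ((poeFactors Y q).take j).prod * exp (s • Y j) *
      (((poeFactors Y q).take (k + 1)).drop (j + 1)).prod := by
  rw [poePartial_eq_prod_take, poeFactors_update,
    List.prod_take_set _ hjk (by simp [poeFactors])]

-- `(poeFactors Y q).take j` holds the factors of index `< j`, so its product is `g_{j-1}`.
theorem poeScrew_eq_conj (j : Fin n) (q : Fin n → ℝ) :
    poeScrew Y j q =
      ((poeFactors Y q).take j).prod * Y j * (((poeFactors Y q).take j).prod)⁻¹ := by
  have hcomm : Commute (exp (q j • Y j)) (Y j) := ((Commute.refl _).smul_left _).exp_left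
  have hexp : exp (q j • Y j) * (exp (q j • Y j))⁻¹ = 1 :=
    Matrix.mul_nonsing_inv _ ((Matrix.isUnit_iff_isUnit_det _).mp (Matrix.isUnit_exp _))
  have hg := poePartial_update_of_le Y (le_refl j) q (q j)
  simp only [update_eq_self, List.drop_take, Nat.sub_self, List.take_zero, List.prod_nil,
    mul_one] at hg
  rw [poeScrew, hg, Matrix.mul_inv_rev, mul_assoc _ (exp _), hcomm.eq, ← mul_assoc _ (Y j)]
  simp only [mul_assoc, ← mul_assoc (exp (q j • Y j)) _, hexp, one_mul]

theorem poeScrew_update_of_le {j k : Fin n} (hkj : k ≤ j) (q : Fin n → ℝ) (s : ℝ) :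
    poeScrew Y k (update q j s) = poeScrew Y k q := by
  rcases hkj.lt_or_eq with hkj | rfl
  · rw [poeScrew, poePartial_eq_prod_take, take_poeFactors_update_of_le Y (by omega)]
    rfl
  · rw [poeScrew_eq_conj, poeScrew_eq_conj, take_poeFactors_update_of_le Y le_rfl]

theorem poeScrew_update_eq_conj_exp {j k : Fin n} (hjk : j ≤ k) (q : Fin n → ℝ) :
    ∃ C, ∀ s, poeScrew Y k (update q j s) = ((poeFactors Y q).take j).prod *
      (exp (s • Y j) * C * exp (s • -Y j)) * (((poeFactors Y q).take j).prod)⁻¹ := by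
  set T := (((poeFactors Y q).take (k + 1)).drop (j + 1)).prod
  refine ⟨T * Y k * T⁻¹, fun s => ?_⟩
  rw [poeScrew, poePartial_update_of_le Y hjk, Matrix.mul_inv_rev, Matrix.mul_inv_rev, smul_neg,
    Matrix.exp_neg]
  simp only [mul_assoc]
  rfl

theorem hasPartialDerivAt_poeScrew_of_le {j k : Fin n} (hjk : j ≤ k) (q : Fin n → ℝ) :
    HasPartialDerivAt (poeScrew Y k) ⁅poeScrew Y j q, poeScrew Y k q⁆ j q := by
  set P := ((poeFactors Y q).take j).prod
  obtain ⟨C, hC⟩ := poeScrew_update_eq_conj_exp Y hjk q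
  have hP : P⁻¹ * P = 1 :=
    Matrix.nonsing_inv_mul _ ((Matrix.isUnit_iff_isUnit_det _).mp (isUnit_prod_take_poeFactors ..))
  have hk : poeScrew Y k q = P * (exp (q j • Y j) * C * exp (q j • -Y j)) * P⁻¹ := by
    simpa using hC (q j)
  rw [HasPartialDerivAt, funext hC, poeScrew_eq_conj, hk, Ring.lie_conj_of_mul_eq_one hP]
  exact ((hasDerivAt_exp_smul_conj (Y j) C (q j)).const_mul P).mul_const P⁻¹

theorem hasPartialDerivAt_nestedAd_poeScrew_of_forall_le {i j : Fin n} (hji : j ≤ i)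
    {l : List (Fin n)} (hl : ∀ x ∈ l, j ≤ x) (q : Fin n → ℝ) :
    HasPartialDerivAt (fun p => nestedAd (l.map (poeScrew Y · p)) (poeScrew Y i p))
      ⁅poeScrew Y j q, nestedAd (l.map (poeScrew Y · q)) (poeScrew Y i q)⁆ j q := by
  induction l with
  | nil => exact hasPartialDerivAt_poeScrew_of_le Y hji q
  | cons a l ih =>
    simp only [List.map_cons, nestedAd_cons]
    convert (hasPartialDerivAt_poeScrew_of_le Y (hl a (by simp)) q).lie
      (ih fun x hx => hl x (by simp [hx])) using 1
    -- Jacobi identity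
    simp only [Ring.lie_def]
    noncomm_ring

theorem hasPartialDerivAt_nestedAd_poeScrew_of_sorted {i j : Fin n} (hji : j ≤ i)
    {l : List (Fin n)} (hl : l.Pairwise (· ≤ ·)) (q : Fin n → ℝ) :
    HasPartialDerivAt (fun p => nestedAd (l.map (poeScrew Y · p)) (poeScrew Y i p))
      (nestedAd ((l.orderedInsert (· ≤ ·) j).map (poeScrew Y · q)) (poeScrew Y i q)) j q := by
  induction l with
  | nil => exact hasPartialDerivAt_poeScrew_of_le Y hji q
  | cons a l ih =>
    obtain ⟨ha, hl⟩ := List.pairwise_cons.mp hl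
    by_cases hja : j ≤ a
    · rw [List.orderedInsert_cons, if_pos hja, List.map_cons, nestedAd_cons]
      refine hasPartialDerivAt_nestedAd_poeScrew_of_forall_le Y hji ?_ q
      simpa [hja] using fun x hx => hja.trans (ha x hx)
    · rw [List.orderedInsert_cons, if_neg hja]
      simp only [List.map_cons, nestedAd_cons]
      convert (HasPartialDerivAt.of_update_eq
        (poeScrew_update_of_le Y (le_of_not_ge hja) q)).lie (ih hl) using 1
      simp [Ring.lie_def]

theorem hasPartialDerivAt_nestedAd_poeScrew_of_forall_ge {i j : Fin n} (hij : i ≤ j)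
    {l : List (Fin n)} (hl : ∀ x ∈ l, x ≤ j) (q : Fin n → ℝ) :
    HasPartialDerivAt (fun p => nestedAd (l.map (poeScrew Y · p)) (poeScrew Y i p)) 0 j q :=
  HasPartialDerivAt.of_update_eq fun s => by
    rw [List.map_congr_left fun x hx => poeScrew_update_of_le Y (hl x hx) q s,
      poeScrew_update_of_le Y hij]

noncomputable def poeScrewDerivFormula (i : Fin n) (L : List (Fin n)) (q : Fin n → ℝ) :
    Matrix (Fin m) (Fin m) ℝ :=
  if ∀ x ∈ L, x < i then
    nestedAd ((L.insertionSort (· ≤ ·)).map (poeScrew Y · q)) (poeScrew Y i q)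
  else 0

theorem hasPartialDerivAt_poeScrewDerivFormula (i j : Fin n) (L : List (Fin n))
    (q : Fin n → ℝ) :
    HasPartialDerivAt (poeScrewDerivFormula Y i L) (poeScrewDerivFormula Y i (j :: L) q) j q := by
  by_cases hL : ∀ x ∈ L, x < i
  · have hF : poeScrewDerivFormula Y i L = fun p =>
        nestedAd ((L.insertionSort (· ≤ ·)).map (poeScrew Y · p)) (poeScrew Y i p) :=
      funext fun _ => if_pos hL
    rw [hF, poeScrewDerivFormula]
    by_cases hj : j < i
    · rw [if_pos ((List.forall_mem_cons (p := (· < i))).mpr ⟨hj, hL⟩), List.insertionSort_cons]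
      exact hasPartialDerivAt_nestedAd_poeScrew_of_sorted Y hj.le
        (List.pairwise_insertionSort _ L) q
    · rw [if_neg fun h => hj (h j List.mem_cons_self)]
      refine hasPartialDerivAt_nestedAd_poeScrew_of_forall_ge Y (not_lt.mp hj) (fun x hx => ?_) q
      exact ((hL x ((List.mem_insertionSort _).mp hx)).trans_le (not_lt.mp hj)).le
  · have hF : poeScrewDerivFormula Y i L = fun _ => 0 := funext fun _ => if_neg hL
    rw [hF, poeScrewDerivFormula, if_neg fun h => hL fun x hx => h x (List.mem_cons_of_mem j hx)]
    exact HasPartialDerivAt.of_update_eq fun _ => rfl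

theorem partialDerivSeq_poeScrew (i : Fin n) (L : List (Fin n)) (q : Fin n → ℝ) :
    (Matrix.of fun a b => partialDerivSeq L (fun p => poeScrew Y i p a b) q) =
      poeScrewDerivFormula Y i L q := by
  induction L generalizing q with
  | nil => ext; simp [partialDerivSeq, poeScrewDerivFormula, nestedAd]
  | cons j L ih =>
    ext a b
    have hL : partialDerivSeq L (fun p => poeScrew Y i p a b) =
        fun p => poeScrewDerivFormula Y i L p a b :=
      funext fun p => congrFun (congrFun (ih p) a) b
    rw [Matrix.of_apply, partialDerivSeq, hL]
    exact (hasPartialDerivAt_poeScrewDerivFormula Y i j L q).partialDeriv_apply a b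

end PoeScrew

/-- The iterated partial derivative of the joint screw `Sᵢ` along indices
`α₁,…,α_ν` all `< i` equals the nested Lie brackets
`ad_{S_{β_ν}} ⋯ ad_{S_{β₁}} Sᵢ`, where `β` is the decreasing rearrangement of `α`
(here `β` listed increasingly with the outermost `ad` by the smallest index);
the derivative vanishes whenever some `α_l ≥ i`. -/
theorem poeScrew_iterated_partialDeriv {m n ν : ℕ}
    (Y : Fin n → Matrix (Fin m) (Fin m) ℝ) (i : Fin n)
    (α : Fin ν → Fin n) (q : Fin n → ℝ) :
    ((∀ l, α l < i) →
      ∀ β : Fin ν → Fin n, Monotone β → (∃ σ : Equiv.Perm (Fin ν), β = α ∘ σ) →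
        (Matrix.of fun a b =>
            partialDerivSeq (List.ofFn α) (fun p => poeScrew Y i p a b) q) =
          nestedAd (List.ofFn fun l => poeScrew Y (β l) q) (poeScrew Y i q)) ∧
    ((∃ l, i ≤ α l) →
      (Matrix.of fun a b =>
          partialDerivSeq (List.ofFn α) (fun p => poeScrew Y i p a b) q) = 0) := by
  rw [partialDerivSeq_poeScrew, poeScrewDerivFormula]
  constructor
  · rintro hα β hβ ⟨σ, hβα⟩
    rw [if_pos (List.forall_mem_ofFn_iff.mpr hα),
      List.insertionSort_ofFn_eq_of_monotone hβ σ hβα, List.map_ofFn]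
    rfl
  · rintro ⟨l, hl⟩
    exact if_neg fun hα => (List.forall_mem_ofFn_iff.mp hα l).not_ge hl
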